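/- arXiv:2112.11633 — 4 statements merged into one kernel-verified Lean document; each statement's English description precedes it below -/
import Mathlib

section
/- For nonzero complex numbers q1 and q2, the equation [2]_{q1}²·(2 − (q2² + q2⁻²)) = [2]_{q2}²·(2 + (q1² + q1⁻²)) holds if and only if q1² = −1 or q2⁴ = −1. (This is the case ε_P = −ε_Q = ε_R of the sign equation arising from the braiding classification.) -/
/-!
With `x = q₁ + q₁⁻¹` and `y = q₂ - q₂⁻¹`, the two sides are `-x²y²` and `(q₂ + q₂⁻¹)²x²`, because
`2 + (q² + q⁻²) = (q + q⁻¹)²` and `2 - (q² + q⁻²) = -(q - q⁻¹)²`. Since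
`(q - q⁻¹)² + (q + q⁻¹)² = 2(q² + q⁻²)`, the equation says `x² (q₂² + q₂⁻²) = 0`, and
for `q ≠ 0` the factors `q + q⁻¹` and `q² + q⁻²` vanish exactly when `q² = -1` and
`q⁴ = -1` respectively.
-/

/-- Quantum integer `[2]_q = q + q⁻¹`. -/
noncomputable def qtwo (q : ℂ) : ℂ := q + q⁻¹

section Field

variable {K : Type*} [Field K] {q : K}

theorem two_sub_sq_add_inv_sq (hq : q ≠ 0) : 2 - (q ^ 2 + q⁻¹ ^ 2) = -(q - q⁻¹) ^ 2 := by
  field_simp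
  ring

theorem add_inv_eq_zero_iff (hq : q ≠ 0) : q + q⁻¹ = 0 ↔ q ^ 2 = -1 := by
  rw [← mul_left_inj' hq]
  constructor <;> intro h <;> field_simp at h ⊢ <;> linear_combination h

theorem sq_add_inv_sq_eq_zero_iff (hq : q ≠ 0) : q ^ 2 + q⁻¹ ^ 2 = 0 ↔ q ^ 4 = -1 := by
  rw [inv_pow, add_inv_eq_zero_iff (pow_ne_zero 2 hq), ← pow_mul]

end Field

theorem two_add_sq_add_inv_sq {q : ℂ} (hq : q ≠ 0) : 2 + (q ^ 2 + q⁻¹ ^ 2) = qtwo q ^ 2 := by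
  unfold qtwo
  field_simp
  ring

/-- For nonzero complex `q1`, `q2`:
`[2]_{q1}²·(2 − (q2² + q2⁻²)) = [2]_{q2}²·(2 + (q1² + q1⁻²))` iff
`q1² = −1` or `q2⁴ = −1`. -/
theorem sign_equation_case_PmQP (q1 q2 : ℂ) (h1 : q1 ≠ 0) (h2 : q2 ≠ 0) :
    qtwo q1 ^ 2 * (2 - (q2 ^ 2 + (q2⁻¹) ^ 2)) = qtwo q2 ^ 2 * (2 + (q1 ^ 2 + (q1⁻¹) ^ 2)) ↔
      q1 ^ 2 = -1 ∨ q2 ^ 4 = -1 := by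
  rw [two_sub_sq_add_inv_sq h2, two_add_sq_add_inv_sq h1]
  have factored : qtwo q1 ^ 2 * -(q2 - q2⁻¹) ^ 2 = qtwo q2 ^ 2 * qtwo q1 ^ 2 ↔
      qtwo q1 ^ 2 * (q2 ^ 2 + q2⁻¹ ^ 2) = 0 := by
    unfold qtwo
    constructor <;> intro h
    · linear_combination (-1 / 2 : ℂ) * h
    · linear_combination -2 * h
  rw [factored, mul_eq_zero, pow_eq_zero_iff two_ne_zero, qtwo, add_inv_eq_zero_iff h1,
    sq_add_inv_sq_eq_zero_iff h2]
end

section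
/- Let q1, q2 be nonzero complex numbers and let ε_P, ε_Q, ε_R ∈ {1, −1}. Then the equation [2]_{q1}²·(2 − ε_P·ε_R·(q2² + q2⁻²)) = [2]_{q2}²·(2 − ε_Q·ε_R·(q1² + q1⁻²)) holds if and only if one of the following four cases occurs: (i) ε_P = ε_Q = −ε_R; (ii) ε_P = ε_Q = ε_R and (q1² = q2² or q1²·q2² = 1); (iii) ε_P = −ε_Q = ε_R and (q1² = −1 or q2⁴ = −1); (iv) ε_P = −ε_Q = −ε_R and (q1⁴ = −1 or q2² = −1). -/
/-! With `a = q₁²` and `b = q₂²`, multiplying both sides by `a b` turns the equation into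
`(a+1)² (2b - s(b²+1)) = (b+1)² (2a - t(a²+1))` with `s = ε_P ε_R`, `t = ε_Q ε_R`.
For `s = 1` the factor `2b - (b²+1)` is `-(b-1)²`, for `s = -1` it is `(b+1)²`, so each of
the four sign patterns factors: `4(a-b)(ab-1) = 0`, an identity, `2(a+1)²(b²+1) = 0`, or its
mirror image. -/

section Cleared

variable {R : Type*} [CommRing R]

/-- `a b · [2]_{q₁}² (2 - s (q₂² + q₂⁻²))` written in `a = q₁²` and `b = q₂²`. -/
def clearedSide (s a b : R) : R := (a + 1) ^ 2 * (2 * b - s * (b ^ 2 + 1))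

theorem clearedSide_neg_one_symm (a b : R) : clearedSide (-1) a b = clearedSide (-1) b a := by
  unfold clearedSide; ring

variable [IsDomain R] [NeZero (2 : R)]

theorem clearedSide_one_eq_iff (a b : R) :
    clearedSide 1 a b = clearedSide 1 b a ↔ a = b ∨ a * b = 1 := by
  have h4 : (4 : R) ≠ 0 := by
    simpa [show (4 : R) = 2 * 2 by norm_num] using (NeZero.ne (2 : R))
  have hdiff : clearedSide 1 a b - clearedSide 1 b a = 4 * ((a - b) * (a * b - 1)) := by
    unfold clearedSide; ring
  rw [← sub_eq_zero, hdiff, mul_eq_zero, or_iff_right h4, mul_eq_zero, sub_eq_zero,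
    sub_eq_zero]

theorem clearedSide_one_eq_neg_one_iff (a b : R) :
    clearedSide 1 a b = clearedSide (-1) b a ↔ a = -1 ∨ b ^ 2 = -1 := by
  have hdiff : clearedSide 1 a b - clearedSide (-1) b a = -2 * ((a + 1) ^ 2 * (b ^ 2 + 1)) := by
    unfold clearedSide; ring
  rw [← sub_eq_zero, hdiff, mul_eq_zero, or_iff_right (neg_ne_zero.mpr (NeZero.ne 2)),
    mul_eq_zero, pow_eq_zero_iff two_ne_zero, add_eq_zero_iff_eq_neg, add_eq_zero_iff_eq_neg]

theorem clearedSide_neg_one_eq_one_iff (a b : R) :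
    clearedSide (-1) a b = clearedSide 1 b a ↔ a ^ 2 = -1 ∨ b = -1 := by
  rw [eq_comm, clearedSide_one_eq_neg_one_iff, or_comm]

end Cleared

theorem sq_mul_sq_mul_qtwo_sq_mul {q1 q2 : ℂ} (h1 : q1 ≠ 0) (h2 : q2 ≠ 0) (s : ℂ) :
    q1 ^ 2 * q2 ^ 2 * (qtwo q1 ^ 2 * (2 - s * (q2 ^ 2 + q2⁻¹ ^ 2))) =
      clearedSide s (q1 ^ 2) (q2 ^ 2) := by
  unfold qtwo clearedSide
  field_simp

theorem qtwo_sq_mul_eq_iff_clearedSide {q1 q2 : ℂ} (h1 : q1 ≠ 0) (h2 : q2 ≠ 0) (s t : ℂ) :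
    qtwo q1 ^ 2 * (2 - s * (q2 ^ 2 + q2⁻¹ ^ 2)) = qtwo q2 ^ 2 * (2 - t * (q1 ^ 2 + q1⁻¹ ^ 2)) ↔
      clearedSide s (q1 ^ 2) (q2 ^ 2) = clearedSide t (q2 ^ 2) (q1 ^ 2) := by
  have hab : q1 ^ 2 * q2 ^ 2 ≠ 0 := by positivity
  rw [← sq_mul_sq_mul_qtwo_sq_mul h1 h2, ← sq_mul_sq_mul_qtwo_sq_mul h2 h1, mul_comm (q2 ^ 2),
    mul_right_inj' hab]

/-- For nonzero complex `q1`, `q2` and signs `εP, εQ, εR ∈ {1, −1}`, the equation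
`[2]_{q1}²·(2 − εP·εR·(q2² + q2⁻²)) = [2]_{q2}²·(2 − εQ·εR·(q1² + q1⁻²))` holds iff
one of the four listed sign cases occurs. -/
theorem sign_equation_classification (q1 q2 : ℂ) (h1 : q1 ≠ 0) (h2 : q2 ≠ 0)
    (εP εQ εR : ℂ) (hP : εP = 1 ∨ εP = -1) (hQ : εQ = 1 ∨ εQ = -1)
    (hR : εR = 1 ∨ εR = -1) :
    qtwo q1 ^ 2 * (2 - εP * εR * (q2 ^ 2 + (q2⁻¹) ^ 2)) =
      qtwo q2 ^ 2 * (2 - εQ * εR * (q1 ^ 2 + (q1⁻¹) ^ 2)) ↔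
    ((εP = εQ ∧ εQ = -εR) ∨
     (εP = εQ ∧ εQ = εR ∧ (q1 ^ 2 = q2 ^ 2 ∨ q1 ^ 2 * q2 ^ 2 = 1)) ∨
     (εP = -εQ ∧ εP = εR ∧ (q1 ^ 2 = -1 ∨ q2 ^ 4 = -1)) ∨
     (εP = -εQ ∧ εP = -εR ∧ (q1 ^ 4 = -1 ∨ q2 ^ 2 = -1))) := by
  rw [qtwo_sq_mul_eq_iff_clearedSide h1 h2]
  rcases hP with rfl | rfl <;> rcases hQ with rfl | rfl <;> rcases hR with rfl | rfl <;>
    simp only [mul_one, mul_neg, neg_neg, clearedSide_one_eq_iff, clearedSide_one_eq_neg_one_iff,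
      clearedSide_neg_one_eq_one_iff, ← pow_mul] <;>
    first | exact iff_of_true (clearedSide_neg_one_symm _ _) (by norm_num) | norm_num
end

section
/- With A and ⋆ as in the context: the product ⋆ is associative and commutative, so that (A, ⋆) is a commutative unital associative ℂ-algebra with multiplicative unit E. -/
/-! Commutativity and the unit `E` can be read off the formula for the product, for arbitrary
structure constants `b₁, b₂, D`. The `E`, `P`, `Q` coordinates of the associator vanish
identically, and its `I` coordinate is `(D² - (1 + b₁)(1 + b₂)) / D²` times
`x_P y_Q z_I + x_Q y_P z_I - x_I y_P z_Q - x_I y_Q z_P`. Since `[3]_q = [2]_q² - 1`, here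
`(1 + b₁)(1 + b₂) = a₁² a₂² = D²`. -/

/-- The underlying 4-dimensional complex vector space of the convolution algebra,
with coordinates recording the coefficients of the basis vectors `E`, `P`, `Q`, `I`. -/
abbrev ConvAlg : Type := ℂ × ℂ × ℂ × ℂ

/-- The basis vector `E` (the cup–cap diagram). -/
def Ev : ConvAlg := (1, 0, 0, 0)

/-- The basis vector `P` (minimal idempotent projecting onto `X₂ ⊠ 1`). -/
def Pv : ConvAlg := (0, 1, 0, 0)

/-- The basis vector `Q` (minimal idempotent projecting onto `1 ⊠ Y₂`). -/
def Qv : ConvAlg := (0, 0, 1, 0)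

/-- The basis vector `I` (the identity of `End(X ⊗ X)`). -/
def Iv : ConvAlg := (0, 0, 0, 1)

/-- The convolution (horizontal) product on `End(X ⊗ X)` in the category
`C_{q1,q2}`, written in the basis `E, P, Q, I`: it is the unique `ℂ`-bilinear
product with `E ⋆ x = x ⋆ E = x`, `I ⋆ I = D·I`, `I ⋆ P = P ⋆ I = (b1/D)·I`,
`I ⋆ Q = Q ⋆ I = (b2/D)·I`, `P ⋆ P = (b1/D²)·E + ((b1−1)/D)·P`,
`Q ⋆ Q = (b2/D²)·E + ((b2−1)/D)·Q`, and
`P ⋆ Q = Q ⋆ P = (1/D)·(I − (1/D)·E − P − Q)`, where `a1 = [2]_{q1}`,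
`a2 = [2]_{q2}`, `b1 = [3]_{q1}`, `b2 = [3]_{q2}`, `D = a1·a2`. -/
noncomputable def convMul (q1 q2 : ℂ) (x y : ConvAlg) : ConvAlg :=
  let b1 : ℂ := q1 ^ 2 + 1 + (q1⁻¹) ^ 2
  let b2 : ℂ := q2 ^ 2 + 1 + (q2⁻¹) ^ 2
  let D : ℂ := (q1 + q1⁻¹) * (q2 + q2⁻¹)
  let xE := x.1; let xP := x.2.1; let xQ := x.2.2.1; let xI := x.2.2.2
  let yE := y.1; let yP := y.2.1; let yQ := y.2.2.1; let yI := y.2.2.2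
  ( xE * yE + (b1 / D ^ 2) * (xP * yP) + (b2 / D ^ 2) * (xQ * yQ)
      - (1 / D ^ 2) * (xP * yQ + xQ * yP),
    xE * yP + xP * yE + ((b1 - 1) / D) * (xP * yP) - (1 / D) * (xP * yQ + xQ * yP),
    xE * yQ + xQ * yE + ((b2 - 1) / D) * (xQ * yQ) - (1 / D) * (xP * yQ + xQ * yP),
    xE * yI + xI * yE + D * (xI * yI) + (b1 / D) * (xP * yI + xI * yP)
      + (b2 / D) * (xQ * yI + xI * yQ) + (1 / D) * (xP * yQ + xQ * yP) )


section

variable {K : Type*} [Field K]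

noncomputable def convMulOf (b₁ b₂ D : K) (x y : K × K × K × K) : K × K × K × K :=
  ( x.1 * y.1 + (b₁ / D ^ 2) * (x.2.1 * y.2.1) + (b₂ / D ^ 2) * (x.2.2.1 * y.2.2.1)
      - (1 / D ^ 2) * (x.2.1 * y.2.2.1 + x.2.2.1 * y.2.1),
    x.1 * y.2.1 + x.2.1 * y.1 + ((b₁ - 1) / D) * (x.2.1 * y.2.1)
      - (1 / D) * (x.2.1 * y.2.2.1 + x.2.2.1 * y.2.1),
    x.1 * y.2.2.1 + x.2.2.1 * y.1 + ((b₂ - 1) / D) * (x.2.2.1 * y.2.2.1)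
      - (1 / D) * (x.2.1 * y.2.2.1 + x.2.2.1 * y.2.1),
    x.1 * y.2.2.2 + x.2.2.2 * y.1 + D * (x.2.2.2 * y.2.2.2)
      + (b₁ / D) * (x.2.1 * y.2.2.2 + x.2.2.2 * y.2.1)
      + (b₂ / D) * (x.2.2.1 * y.2.2.2 + x.2.2.2 * y.2.2.1)
      + (1 / D) * (x.2.1 * y.2.2.1 + x.2.2.1 * y.2.1) )

variable (b₁ b₂ D : K)

theorem convMulOf_comm (x y : K × K × K × K) :
    convMulOf b₁ b₂ D x y = convMulOf b₁ b₂ D y x := by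
  simp only [convMulOf, Prod.mk.injEq]
  refine ⟨by ring, by ring, by ring, by ring⟩

theorem convMulOf_one_left (x : K × K × K × K) : convMulOf b₁ b₂ D (1, 0, 0, 0) x = x := by
  simp only [convMulOf]
  ext <;> simp

theorem convMulOf_one_right (x : K × K × K × K) : convMulOf b₁ b₂ D x (1, 0, 0, 0) = x := by
  rw [convMulOf_comm, convMulOf_one_left]

variable {b₁ b₂ D}

theorem convMulOf_assoc (hD : D ≠ 0) (h : (1 + b₁) * (1 + b₂) = D ^ 2)
    (x y z : K × K × K × K) :
    convMulOf b₁ b₂ D (convMulOf b₁ b₂ D x y) z =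
      convMulOf b₁ b₂ D x (convMulOf b₁ b₂ D y z) := by
  obtain ⟨xE, xP, xQ, xI⟩ := x
  obtain ⟨yE, yP, yQ, yI⟩ := y
  obtain ⟨zE, zP, zQ, zI⟩ := z
  simp only [convMulOf, Prod.mk.injEq]
  refine ⟨by ring, by ring, by ring, ?_⟩
  field_simp
  linear_combination (-(xP * yQ * zI + xQ * yP * zI - xI * yP * zQ - xI * yQ * zP)) * h

theorem qInt3_eq_qInt2_sq_sub_one {q : K} (hq : q ≠ 0) :
    q ^ 2 + 1 + q⁻¹ ^ 2 = (q + q⁻¹) ^ 2 - 1 := by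
  field_simp
  ring

end

theorem convMul_eq_convMulOf (q1 q2 : ℂ) :
    convMul q1 q2 = convMulOf (q1 ^ 2 + 1 + q1⁻¹ ^ 2) (q2 ^ 2 + 1 + q2⁻¹ ^ 2)
      ((q1 + q1⁻¹) * (q2 + q2⁻¹)) := rfl

/-- The convolution product is associative and commutative, with two-sided
multiplicative unit `E`; thus `(A, ⋆)` is a commutative unital associative
`ℂ`-algebra. -/
theorem convMul_comm_assoc_unital (q1 q2 : ℂ) (h1 : q1 ≠ 0) (h2 : q2 ≠ 0)
    (ha1 : q1 + q1⁻¹ ≠ 0) (ha2 : q2 + q2⁻¹ ≠ 0) :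
    (∀ x y z : ConvAlg,
      convMul q1 q2 (convMul q1 q2 x y) z = convMul q1 q2 x (convMul q1 q2 y z)) ∧
    (∀ x y : ConvAlg, convMul q1 q2 x y = convMul q1 q2 y x) ∧
    (∀ x : ConvAlg, convMul q1 q2 Ev x = x) ∧
    (∀ x : ConvAlg, convMul q1 q2 x Ev = x) := by
  have hD2 : (1 + (q1 ^ 2 + 1 + q1⁻¹ ^ 2)) * (1 + (q2 ^ 2 + 1 + q2⁻¹ ^ 2))
      = ((q1 + q1⁻¹) * (q2 + q2⁻¹)) ^ 2 := by
    rw [qInt3_eq_qInt2_sq_sub_one h1, qInt3_eq_qInt2_sq_sub_one h2]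
    ring
  rw [convMul_eq_convMulOf]
  exact ⟨convMulOf_assoc (mul_ne_zero ha1 ha2) hD2, convMulOf_comm _ _ _,
    convMulOf_one_left _ _ _, convMulOf_one_right _ _ _⟩
end

section
/- With A and ⋆ as in the context: the commutative unital ℂ-algebra (A, ⋆) is isomorphic as a ℂ-algebra to ℂ × ℂ × ℂ × ℂ with componentwise operations. -/
noncomputable def quantumTwo (q : ℂ) : ℂ := q + q⁻¹

noncomputable def quantumThree (q : ℂ) : ℂ := q ^ 2 + 1 + q⁻¹ ^ 2

theorem quantumThree_add_one {q : ℂ} (hq : q ≠ 0) : quantumThree q + 1 = quantumTwo q ^ 2 := by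
  unfold quantumThree quantumTwo
  field_simp
  ring

theorem ne_zero_of_quantumTwo_ne_zero {q : ℂ} (h : quantumTwo q ≠ 0) : q ≠ 0 := by
  rintro rfl
  simp [quantumTwo] at h

noncomputable def convChar (α β γ : ℂ) : ConvAlg →ₗ[ℂ] ℂ where
  toFun x := x.1 + α * x.2.1 + β * x.2.2.1 + γ * x.2.2.2
  map_add' x y := by simp only [Prod.fst_add, Prod.snd_add]; ring
  map_smul' c x := by simp only [Prod.smul_fst, Prod.smul_snd, smul_eq_mul, RingHom.id_apply]; ring

/-- The equations saying that `convChar α β γ` respects the products `P ⋆ P`, `Q ⋆ Q`, `P ⋆ Q`,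
`I ⋆ I`, `I ⋆ P`, `I ⋆ Q` of the convolution algebra with structure constants `b1`, `b2`, `D`. -/
structure IsConvCharacter (b1 b2 D α β γ : ℂ) : Prop where
  PP : α ^ 2 = b1 / D ^ 2 + (b1 - 1) / D * α
  QQ : β ^ 2 = b2 / D ^ 2 + (b2 - 1) / D * β
  PQ : α * β = (γ - 1 / D - α - β) / D
  II : γ ^ 2 = D * γ
  IP : α * γ = b1 / D * γ
  IQ : β * γ = b2 / D * γ

theorem convChar_convMul {q1 q2 α β γ : ℂ}
    (h : IsConvCharacter (quantumThree q1) (quantumThree q2) (quantumTwo q1 * quantumTwo q2)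
      α β γ) (x y : ConvAlg) :
    convChar α β γ (convMul q1 q2 x y) = convChar α β γ x * convChar α β γ y := by
  obtain ⟨hPP, hQQ, hPQ, hII, hIP, hIQ⟩ := h
  obtain ⟨xE, xP, xQ, xI⟩ := x
  obtain ⟨yE, yP, yQ, yI⟩ := y
  simp only [convChar, convMul, LinearMap.coe_mk, AddHom.coe_mk]
  simp only [quantumThree, quantumTwo] at *
  generalize q1 ^ 2 + 1 + q1⁻¹ ^ 2 = b1 at *
  generalize q2 ^ 2 + 1 + q2⁻¹ ^ 2 = b2 at *
  generalize (q1 + q1⁻¹) * (q2 + q2⁻¹) = D at *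
  linear_combination (-(xP * yP)) * hPP - xQ * yQ * hQQ - (xP * yQ + xQ * yP) * hPQ
    - xI * yI * hII - (xP * yI + xI * yP) * hIP - (xQ * yI + xI * yQ) * hIQ

section Characters

variable {b1 b2 D : ℂ}

theorem isConvCharacter_top (hD : D ≠ 0) (hb : (b1 + 1) * (b2 + 1) = D ^ 2) :
    IsConvCharacter b1 b2 D (b1 / D) (b2 / D) D where
  PP := by ring
  QQ := by ring
  PQ := by field_simp; linear_combination hb
  II := by ring
  IP := rfl
  IQ := rfl

theorem isConvCharacter_left : IsConvCharacter b1 b2 D (b1 / D) (-1 / D) 0 where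
  PP := by ring
  QQ := by ring
  PQ := by ring
  II := by ring
  IP := rfl
  IQ := by ring

theorem isConvCharacter_right : IsConvCharacter b1 b2 D (-1 / D) (b2 / D) 0 where
  PP := by ring
  QQ := by ring
  PQ := by ring
  II := by ring
  IP := by ring
  IQ := rfl

theorem isConvCharacter_bottom : IsConvCharacter b1 b2 D (-1 / D) (-1 / D) 0 where
  PP := by ring
  QQ := by ring
  PQ := by ring
  II := by ring
  IP := by ring
  IQ := by ring

end Characters

noncomputable def convCharacters (b1 b2 D : ℂ) : ConvAlg →ₗ[ℂ] ℂ × ℂ × ℂ × ℂ :=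
  (convChar (b1 / D) (b2 / D) D).prod <| (convChar (b1 / D) (-1 / D) 0).prod <|
    (convChar (-1 / D) (b2 / D) 0).prod (convChar (-1 / D) (-1 / D) 0)

theorem convCharacters_injective {b1 b2 D : ℂ} (hD : D ≠ 0) (hb1 : b1 + 1 ≠ 0)
    (hb2 : b2 + 1 ≠ 0) : Function.Injective (convCharacters b1 b2 D) := by
  rw [← LinearMap.ker_eq_bot, LinearMap.ker_eq_bot']
  rintro ⟨xE, xP, xQ, xI⟩ hx
  simp only [convCharacters, LinearMap.prod_apply, Function.prod, Prod.mk_eq_zero, convChar,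
    LinearMap.coe_mk, AddHom.coe_mk] at hx
  obtain ⟨h1, h2, h3, h4⟩ := hx
  have hP : xP = 0 := by
    have : (b1 + 1) / D * xP = 0 := by linear_combination h2 - h4
    simpa [hD, hb1] using this
  have hQ : xQ = 0 := by
    have : (b2 + 1) / D * xQ = 0 := by linear_combination h3 - h4
    simpa [hD, hb2] using this
  have hE : xE = 0 := by simpa [hP, hQ] using h4
  have hI : xI = 0 := by simpa [hP, hQ, hE, hD] using h1
  simp [hE, hP, hQ, hI]

theorem convCharacters_Ev (b1 b2 D : ℂ) : convCharacters b1 b2 D Ev = 1 := by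
  simp [convCharacters, convChar, Ev]

theorem convAlg_iso_product_general (q1 q2 : ℂ)
    (ha1 : q1 + q1⁻¹ ≠ 0) (ha2 : q2 + q2⁻¹ ≠ 0) :
    ∃ φ : ConvAlg ≃ₗ[ℂ] ℂ × ℂ × ℂ × ℂ,
      (∀ x y : ConvAlg, φ (convMul q1 q2 x y) = φ x * φ y) ∧ φ Ev = 1 := by
  change quantumTwo q1 ≠ 0 at ha1
  change quantumTwo q2 ≠ 0 at ha2
  have hb1 := quantumThree_add_one (ne_zero_of_quantumTwo_ne_zero ha1)
  have hb2 := quantumThree_add_one (ne_zero_of_quantumTwo_ne_zero ha2)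
  have hD : quantumTwo q1 * quantumTwo q2 ≠ 0 := mul_ne_zero ha1 ha2
  let φ := convCharacters (quantumThree q1) (quantumThree q2) (quantumTwo q1 * quantumTwo q2)
  have hφ : Function.Injective φ :=
    convCharacters_injective hD (by simp [hb1, ha1]) (by simp [hb2, ha2])
  refine ⟨LinearEquiv.ofInjectiveEndo φ hφ, fun x y => ?_, convCharacters_Ev _ _ _⟩
  simp only [LinearEquiv.coe_ofInjectiveEndo, φ, convCharacters, LinearMap.prod_apply,
    Function.prod, Prod.mk_mul_mk]
  rw [convChar_convMul (isConvCharacter_top hD (by rw [hb1, hb2]; ring)),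
    convChar_convMul isConvCharacter_left, convChar_convMul isConvCharacter_right,
    convChar_convMul isConvCharacter_bottom]

/-- The convolution algebra `(A, ⋆)` is isomorphic as a `ℂ`-algebra to
`ℂ × ℂ × ℂ × ℂ` with componentwise operations: there is a `ℂ`-linear equivalence
carrying `⋆` to the componentwise product and the unit `E` to `(1,1,1,1)`. -/
theorem convAlg_iso_product (q1 q2 : ℂ) (h1 : q1 ≠ 0) (h2 : q2 ≠ 0)
    (ha1 : q1 + q1⁻¹ ≠ 0) (ha2 : q2 + q2⁻¹ ≠ 0) :
    ∃ φ : ConvAlg ≃ₗ[ℂ] ℂ × ℂ × ℂ × ℂ,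
      (∀ x y : ConvAlg, φ (convMul q1 q2 x y) = φ x * φ y) ∧ φ Ev = 1 :=
  convAlg_iso_product_general q1 q2 ha1 ha2
end
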